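/- arXiv:2605.22515 — 3 statements merged into one kernel-verified Lean document; each statement's English description precedes it below -/
import Mathlib

section
/- Let L = (k' - 1)/(k' + 1) with k' ∈ (0,1), k² = 1 - k'². For each a ∈ (-K, K], let C_a be the circle with center ((dn a - 1)/(dn a + 1), 0) and radius 2 cn a/(1 + dn a). Then the power of the point x = (L² + 1)/(2L) (on the radical axis) with respect to C_a equals ((L² - 1)/(2L))², independently of a; i.e., all circles C_a belong to the coaxal pencil determined by the unit circle T and the limit point L. -/
noncomputable def g (k θ : ℝ) : ℝ := ∫ t in (0:ℝ)..θ, 1 / Real.sqrt (1 - k^2 * Real.sin t ^ 2)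

/-- `K` is the complete elliptic integral `g(π/2)`. -/
noncomputable def KK (k : ℝ) : ℝ := g k (Real.pi / 2)

/-- The amplitude function, inverse of `g`. -/
noncomputable def am (k : ℝ) : ℝ → ℝ := Function.invFun (g k)

noncomputable def cn (k u : ℝ) : ℝ := Real.cos (am k u)
noncomputable def sn (k u : ℝ) : ℝ := Real.sin (am k u)
noncomputable def dn (k u : ℝ) : ℝ := Real.sqrt (1 - k^2 * sn k u ^ 2)

/-- Power of the point `x` (on the real axis) with respect to the circle with real
center `c` and radius `r`. -/
def powerPt (x c r : ℝ) : ℝ := (x - c) ^ 2 - r ^ 2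

/-!
Let `x = (L² + 1)/(2L)`, which is `(1 + k'²)/(k'² - 1)` for `L = (k' - 1)/(k' + 1)`.
The power of `x` with respect to a circle of center `c` and radius `r` is `x² - 1`, its power
with respect to `T`, exactly when `r² = c² + 1 - 2xc`. For `C_a` this condition reduces, after
clearing denominators, to the Jacobi identity `dn² = k'² + k² cn²`.
-/

theorem sn_sq_add_cn_sq (k u : ℝ) : sn k u ^ 2 + cn k u ^ 2 = 1 :=
  Real.sin_sq_add_cos_sq _

theorem dn_nonneg (k u : ℝ) : 0 ≤ dn k u :=
  Real.sqrt_nonneg _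

theorem dn_sq_eq_one_sub_sq_add_sq_mul_cn_sq {k : ℝ} (hk : k ^ 2 ≤ 1) (u : ℝ) :
    dn k u ^ 2 = (1 - k ^ 2) + k ^ 2 * cn k u ^ 2 := by
  have hsc := sn_sq_add_cn_sq k u
  have hsn : k ^ 2 * sn k u ^ 2 ≤ 1 := by nlinarith [sq_nonneg (cn k u), sq_nonneg k]
  rw [dn, Real.sq_sqrt (by linarith)]
  linear_combination (-k ^ 2) * hsc

theorem powerPt_eq_sq_sub_one {x c r : ℝ} (h : r ^ 2 = c ^ 2 + 1 - 2 * x * c) :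
    powerPt x c r = x ^ 2 - 1 := by
  rw [powerPt, h]
  ring

theorem sq_add_one_div_two_mul_sq_sub_one {L : ℝ} (hL : L ≠ 0) :
    ((L ^ 2 + 1) / (2 * L)) ^ 2 - 1 = ((L ^ 2 - 1) / (2 * L)) ^ 2 := by
  field_simp
  ring

theorem sq_add_one_div_two_mul_of_eq_div {k' L : ℝ} (h₁ : k' + 1 ≠ 0) (h₂ : k' - 1 ≠ 0)
    (hL : L = (k' - 1) / (k' + 1)) :
    (L ^ 2 + 1) / (2 * L) = (1 + k' ^ 2) / (k' ^ 2 - 1) := by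
  have h₃ : k' ^ 2 - 1 ≠ 0 := by
    rw [show k' ^ 2 - 1 = (k' + 1) * (k' - 1) by ring]; exact mul_ne_zero h₁ h₂
  subst hL
  field_simp
  ring

theorem radius_sq_eq_of_dn_sq {k' d c : ℝ} (hk' : k' ^ 2 - 1 ≠ 0) (hd : d + 1 ≠ 0)
    (h : d ^ 2 = k' ^ 2 + (1 - k' ^ 2) * c ^ 2) :
    (2 * c / (1 + d)) ^ 2
      = ((d - 1) / (d + 1)) ^ 2 + 1 - 2 * ((1 + k' ^ 2) / (k' ^ 2 - 1)) * ((d - 1) / (d + 1)) := by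
  rw [add_comm 1 d]
  field_simp
  linear_combination 4 * h

theorem stmt_4_general (k' : ℝ) (hk' : k' ∈ Set.Ioo (0:ℝ) 1) (k : ℝ) (hk : k = Real.sqrt (1 - k' ^ 2))
    (L : ℝ) (hL : L = (k' - 1) / (k' + 1)) (a : ℝ) :
    powerPt ((L ^ 2 + 1) / (2 * L)) ((dn k a - 1) / (dn k a + 1)) (2 * cn k a / (1 + dn k a))
      = ((L ^ 2 - 1) / (2 * L)) ^ 2 := by
  obtain ⟨hk'0, hk'1⟩ := hk'
  have hk2 : k ^ 2 = 1 - k' ^ 2 := by rw [hk, Real.sq_sqrt (by nlinarith)]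
  have hL0 : L ≠ 0 := by rw [hL]; exact div_ne_zero (by linarith) (by linarith)
  rw [← sq_add_one_div_two_mul_sq_sub_one hL0]
  apply powerPt_eq_sq_sub_one
  rw [sq_add_one_div_two_mul_of_eq_div (by linarith) (by linarith) hL]
  refine radius_sq_eq_of_dn_sq (by nlinarith) (by linarith [dn_nonneg k a]) ?_
  have hdn := dn_sq_eq_one_sub_sq_add_sq_mul_cn_sq (k := k) (by nlinarith) a
  rw [hk2] at hdn
  linear_combination hdn

theorem stmt_4 (k' : ℝ) (hk' : k' ∈ Set.Ioo (0:ℝ) 1) (k : ℝ) (hk : k = Real.sqrt (1 - k' ^ 2))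
    (L : ℝ) (hL : L = (k' - 1) / (k' + 1)) (a : ℝ) (ha : a ∈ Set.Ioc (-KK k) (KK k)) :
    powerPt ((L ^ 2 + 1) / (2 * L)) ((dn k a - 1) / (dn k a + 1)) (2 * cn k a / (1 + dn k a))
      = ((L ^ 2 - 1) / (2 * L)) ^ 2 :=
  stmt_4_general k' hk' k hk L hL a
end

section
/- For fixed k ∈ (0,1), the set A_k = {ψ_α : α ∈ (-π/2, π/2]} is a commutative group under composition, with identity ψ_0 and inverse of ψ_α equal to ψ_{-α}; moreover ψ_{π/2} is an involution. -/
/-- The map `ψ_α` on the unit circle: writing `z = e^{2iθ}` with `θ = arg z / 2`,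
`ψ_α(z) = e^{2iθ'}` where `g(θ') = g(θ) + g(α)`, i.e. `θ' = am(g(θ) + g(α))`. -/
noncomputable def psi (k α : ℝ) (z : ℂ) : ℂ :=
  Complex.exp (2 * Complex.I * (am k (g k (z.arg / 2) + g k α) : ℝ))


section lemmas
variable {k : ℝ} (hk : k ∈ Set.Ioo (0:ℝ) 1)
open Real MeasureTheory intervalIntegral
include hk

noncomputable def ff (k t : ℝ) : ℝ := 1 / Real.sqrt (1 - k^2 * Real.sin t ^ 2)

lemma den_pos (t : ℝ) : 0 < 1 - k^2 * Real.sin t ^ 2 := by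
  obtain ⟨h0, h1⟩ := hk
  nlinarith [Real.sin_sq_le_one t, sq_nonneg (Real.sin t), sq_nonneg k]

lemma ff_pos (t : ℝ) : 0 < ff k t := by
  have := den_pos hk t
  exact one_div_pos.2 (Real.sqrt_pos.2 this)

lemma ff_cont : Continuous (ff k) := by
  apply Continuous.div continuous_const
  · exact (continuous_const.sub (continuous_const.mul ((Real.continuous_sin).pow 2))).sqrt
  · intro t
    exact ne_of_gt (Real.sqrt_pos.2 (den_pos hk t))

lemma ff_intble (a b : ℝ) : IntervalIntegrable (ff k) volume a b :=
  (ff_cont hk).intervalIntegrable a b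

omit hk in lemma ff_periodic : Function.Periodic (ff k) Real.pi := by
  intro t; simp [ff, Real.sin_add_pi]

omit hk in lemma g_eq (θ : ℝ) : g k θ = ∫ t in (0:ℝ)..θ, ff k t := rfl

lemma g_strictMono : StrictMono (g k) := by
  intro a b hab
  have : 0 < ∫ t in a..b, ff k t :=
    intervalIntegral.intervalIntegral_pos_of_pos (ff_intble hk a b) (ff_pos hk) hab
  have hsplit : g k a + ∫ t in a..b, ff k t = g k b := by
    rw [g_eq, g_eq]
    exact intervalIntegral.integral_add_adjacent_intervals (ff_intble hk 0 a) (ff_intble hk a b)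
  linarith

lemma g_cont : Continuous (g k) := by
  exact intervalIntegral.continuous_primitive (ff_intble hk) 0

lemma g_zero : g k 0 = 0 := by simp [g_eq]

lemma g_neg (θ : ℝ) : g k (-θ) = - g k θ := by
  have h1 : ∀ x : ℝ, ff k (-x) = ff k x := by intro x; simp [ff]
  rw [g_eq, g_eq]
  calc (∫ t in (0:ℝ)..(-θ), ff k t) = ∫ t in (0:ℝ)..(-θ), ff k (-t) := by
        simp [h1]
    _ = ∫ t in θ..(0:ℝ), ff k t := by
        simpa using intervalIntegral.integral_comp_neg (a := (0:ℝ)) (b := -θ) (ff k)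
    _ = -∫ t in (0:ℝ)..θ, ff k t := intervalIntegral.integral_symm 0 θ

lemma g_pi : g k Real.pi = 2 * KK k := by
  have h2 : (∫ t in (Real.pi/2)..Real.pi, ff k t) = ∫ t in (0:ℝ)..(Real.pi/2), ff k t := by
    have := intervalIntegral.integral_comp_sub_left (a := (0:ℝ)) (b := Real.pi/2) (ff k) Real.pi
    have h3 : ∀ x : ℝ, ff k (Real.pi - x) = ff k x := by
      intro x; simp [ff, Real.sin_pi_sub]
    rw [show Real.pi - Real.pi/2 = Real.pi/2 by ring, show Real.pi - 0 = Real.pi by ring] at this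
    calc (∫ t in (Real.pi/2)..Real.pi, ff k t) = ∫ t in (0:ℝ)..(Real.pi/2), ff k (Real.pi - t) := this.symm
      _ = ∫ t in (0:ℝ)..(Real.pi/2), ff k t := by simp [h3]
  have h4 := intervalIntegral.integral_add_adjacent_intervals (ff_intble hk 0 (Real.pi/2)) (ff_intble hk (Real.pi/2) Real.pi)
  rw [g_eq, ← h4, h2, KK, g_eq]; ring

lemma g_add_pi (θ : ℝ) : g k (θ + Real.pi) = g k θ + 2 * KK k := by
  have h1 := (ff_periodic (k := k)).intervalIntegral_add_eq_add 0 θ (ff_intble hk)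
  rw [zero_add] at h1
  rw [g_eq, h1, ← g_eq, ← g_eq, ← g_pi hk]

lemma g_add_int (θ : ℝ) (m : ℤ) : g k (θ + m * Real.pi) = g k θ + m * (2 * KK k) := by
  induction m using Int.induction_on with
  | zero => simp
  | succ n ih =>
    have e : θ + (((n:ℤ) + 1 : ℤ) : ℝ) * Real.pi = (θ + ((n:ℤ):ℝ) * Real.pi) + Real.pi := by
      push_cast; ring
    rw [e, g_add_pi hk, ih]; push_cast; ring
  | pred n ih =>
    have e : θ + ((-(n:ℤ) - 1 : ℤ) : ℝ) * Real.pi = (θ + ((-(n:ℤ) : ℤ):ℝ) * Real.pi) - Real.pi := by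
      push_cast; ring
    have h2 : g k ((θ + ((-(n:ℤ) : ℤ):ℝ) * Real.pi) - Real.pi) = g k (θ + ((-(n:ℤ) : ℤ):ℝ) * Real.pi) - 2 * KK k := by
      have h3 := g_add_pi hk ((θ + ((-(n:ℤ) : ℤ):ℝ) * Real.pi) - Real.pi)
      rw [sub_add_cancel] at h3
      linarith
    rw [e, h2, ih]; push_cast; ring

lemma K_pos : 0 < KK k := by
  have := g_strictMono hk (show (0:ℝ) < Real.pi/2 by positivity)
  rwa [g_zero hk] at this

lemma g_surj : Function.Surjective (g k) := by
  apply Continuous.surjective (g_cont hk)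
  · apply Filter.tendsto_atTop_atTop_of_monotone (g_strictMono hk).monotone
    intro b
    obtain ⟨m, hm⟩ := exists_nat_ge (b / (2 * KK k))
    refine ⟨(m:ℝ) * Real.pi, ?_⟩
    have h1 : g k ((m:ℝ) * Real.pi) = (m:ℝ) * (2 * KK k) := by
      have := g_add_int hk 0 m
      simpa [g_zero hk] using this
    rw [h1]
    have hKpos : 0 < 2 * KK k := by have := K_pos hk; linarith
    calc b = (b / (2 * KK k)) * (2 * KK k) := by rw [div_mul_cancel₀ _ hKpos.ne']
      _ ≤ (m:ℝ) * (2 * KK k) := by apply mul_le_mul_of_nonneg_right hm hKpos.le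
  · apply Filter.tendsto_atBot_atBot_of_monotone (g_strictMono hk).monotone
    intro b
    obtain ⟨m, hm⟩ := exists_nat_ge (-b / (2 * KK k))
    refine ⟨-((m:ℝ) * Real.pi), ?_⟩
    rw [g_neg hk]
    have h1 : g k ((m:ℝ) * Real.pi) = (m:ℝ) * (2 * KK k) := by
      simpa [g_zero hk] using g_add_int hk 0 m
    rw [h1]
    have hKpos : 0 < 2 * KK k := by have := K_pos hk; linarith
    have : -b ≤ (m:ℝ) * (2 * KK k) := by
      calc -b = (-b / (2 * KK k)) * (2 * KK k) := by rw [div_mul_cancel₀ _ hKpos.ne']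
        _ ≤ (m:ℝ) * (2 * KK k) := mul_le_mul_of_nonneg_right hm hKpos.le
    linarith

lemma am_g (θ : ℝ) : am k (g k θ) = θ :=
  Function.leftInverse_invFun (g_strictMono hk).injective θ

lemma g_am (u : ℝ) : g k (am k u) = u :=
  Function.rightInverse_invFun (g_surj hk) u

lemma am_add_int (u : ℝ) (m : ℤ) : am k (u + m * (2 * KK k)) = am k u + m * Real.pi := by
  apply (g_strictMono hk).injective
  rw [g_am hk, g_add_int hk, g_am hk]

omit hk in lemma exp_pi_periodic (x : ℝ) (m : ℤ) :
    Complex.exp (2 * Complex.I * ((x + m * Real.pi : ℝ) : ℂ)) = Complex.exp (2 * Complex.I * (x:ℝ)) := by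
  push_cast
  rw [mul_add, Complex.exp_add]
  have : (2 : ℂ) * Complex.I * ((m:ℂ) * (Real.pi:ℂ)) = (m:ℂ) * (2 * Real.pi * Complex.I) := by ring
  rw [this, Complex.exp_int_mul_two_pi_mul_I, mul_one]

omit hk in lemma exp_two_I_norm (φ : ℝ) : ‖Complex.exp (2 * Complex.I * (φ:ℝ))‖ = 1 := by
  rw [Complex.norm_exp]
  simp [Complex.mul_re]

omit hk in lemma arg_exp_two (φ : ℝ) : ∃ m : ℤ, (Complex.exp (2 * Complex.I * (φ:ℝ))).arg / 2 = φ + m * Real.pi := by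
  have habs : ‖Complex.exp (2 * Complex.I * (φ:ℝ))‖ = 1 := by
    rw [Complex.norm_exp]; simp [Complex.mul_re]
  have h1 : Complex.exp (((Complex.exp (2 * Complex.I * (φ:ℝ))).arg : ℂ) * Complex.I)
      = Complex.exp (2 * Complex.I * (φ:ℝ)) := by
    have h0 := Complex.norm_mul_exp_arg_mul_I (Complex.exp (2 * Complex.I * (φ:ℝ)))
    rwa [habs, Complex.ofReal_one, one_mul] at h0
  obtain ⟨n, hn⟩ := Complex.exp_eq_exp_iff_exists_int.1 h1
  refine ⟨n, ?_⟩
  have h4 : (Complex.exp (2 * Complex.I * (φ:ℝ))).arg = 2 * φ + n * (2 * Real.pi) := by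
    have him := congrArg Complex.im hn
    simpa [Complex.mul_im, Complex.mul_re] using him
  rw [h4]; ring

lemma psi_exp (α φ : ℝ) :
    psi k α (Complex.exp (2 * Complex.I * (φ:ℝ))) =
      Complex.exp (2 * Complex.I * ((am k (g k φ + g k α) : ℝ) : ℂ)) := by
  obtain ⟨m, hm⟩ := arg_exp_two φ
  rw [psi, hm]
  have hg : g k (φ + m * Real.pi) = g k φ + m * (2 * KK k) := g_add_int hk φ m
  rw [hg]
  have : g k φ + ↑m * (2 * KK k) + g k α = (g k φ + g k α) + m * (2 * KK k) := by ring
  rw [this, am_add_int hk]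
  exact exp_pi_periodic _ m

omit hk in lemma z_eq_exp {z : ℂ} (hz : ‖z‖ = 1) : z = Complex.exp (2 * Complex.I * ((z.arg / 2 : ℝ) : ℂ)) := by
  have h0 := Complex.norm_mul_exp_arg_mul_I z
  rw [hz, Complex.ofReal_one, one_mul] at h0
  calc z = Complex.exp ((z.arg : ℂ) * Complex.I) := h0.symm
    _ = Complex.exp (2 * Complex.I * ((z.arg / 2 : ℝ) : ℂ)) := by congr 1; push_cast; ring

omit hk in lemma psi_apply {z : ℂ} (hz : ‖z‖ = 1) (α : ℝ) :
    psi k α z = Complex.exp (2 * Complex.I * ((am k (g k (z.arg/2) + g k α) : ℝ) : ℂ)) := rfl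

lemma psi_psi {z : ℂ} (hz : ‖z‖ = 1) (α β : ℝ) :
    psi k β (psi k α z) =
      Complex.exp (2 * Complex.I * ((am k (g k (z.arg/2) + g k α + g k β) : ℝ) : ℂ)) := by
  rw [psi_apply hz α, psi_exp hk, g_am hk]

end lemmas

theorem stmt_8 (k : ℝ) (hk : k ∈ Set.Ioo (0:ℝ) 1) :
    -- closure: the composite of two elements of `A_k` is again an element of `A_k`
    (∀ α ∈ Set.Ioc (-(Real.pi/2)) (Real.pi/2), ∀ β ∈ Set.Ioc (-(Real.pi/2)) (Real.pi/2),
      ∃ γ ∈ Set.Ioc (-(Real.pi/2)) (Real.pi/2),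
        ∀ z : ℂ, ‖z‖ = 1 → psi k β (psi k α z) = psi k γ z) ∧
    -- commutativity
    (∀ α β : ℝ, ∀ z : ℂ, ‖z‖ = 1 → psi k β (psi k α z) = psi k α (psi k β z)) ∧
    -- identity element `ψ₀`
    (∀ z : ℂ, ‖z‖ = 1 → psi k 0 z = z) ∧
    -- inverse of `ψ_α` is `ψ_{-α}`
    (∀ α : ℝ, ∀ z : ℂ, ‖z‖ = 1 → psi k (-α) (psi k α z) = z ∧ psi k α (psi k (-α) z) = z) ∧
    -- `ψ_{π/2}` is an involution, and it is the only nondegenerate one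
    (∀ z : ℂ, ‖z‖ = 1 → psi k (Real.pi/2) (psi k (Real.pi/2) z) = z) ∧
    (∀ α ∈ Set.Ioc (-(Real.pi/2)) (Real.pi/2), (∀ z : ℂ, ‖z‖ = 1 → psi k α (psi k α z) = z) →
      α = 0 ∨ α = Real.pi/2) := by
  have hKpos := K_pos hk
  have hginj := (g_strictMono hk).injective
  -- g maps Ioc(-π/2, π/2] into Ioc(-K, K]
  have hgIoc : ∀ α ∈ Set.Ioc (-(Real.pi/2)) (Real.pi/2), g k α ∈ Set.Ioc (-(KK k)) (KK k) := by
    intro α ⟨h1, h2⟩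
    constructor
    · have := g_strictMono hk h1
      rwa [g_neg hk] at this
    · exact (g_strictMono hk).monotone h2
  -- identity on unit circle
  have hid : ∀ z : ℂ, ‖z‖ = 1 → Complex.exp (2 * Complex.I * ((z.arg/2 : ℝ) : ℂ)) = z :=
    fun z hz => (z_eq_exp hz).symm
  refine ⟨?_, ?_, ?_, ?_, ?_, ?_⟩
  · -- closure
    intro α hα β hβ
    obtain ⟨ha1, ha2⟩ := hgIoc α hα
    obtain ⟨hb1, hb2⟩ := hgIoc β hβ
    set s := g k α + g k β with hs
    have key : ∀ (m : ℤ), s + m * (2 * KK k) ∈ Set.Ioc (-(KK k)) (KK k) →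
        ∃ γ ∈ Set.Ioc (-(Real.pi/2)) (Real.pi/2),
          ∀ z : ℂ, ‖z‖ = 1 → psi k β (psi k α z) = psi k γ z := by
      intro m hm
      refine ⟨am k (s + m * (2 * KK k)), ?_, ?_⟩
      · constructor
        · have h5 : g k (-(Real.pi/2)) < g k (am k (s + m * (2*KK k))) := by
            rw [g_am hk, g_neg hk, ← KK]; exact hm.1
          exact (g_strictMono hk).lt_iff_lt.1 h5
        · have h5 : g k (am k (s + m * (2*KK k))) ≤ g k (Real.pi/2) := by
            rw [g_am hk]; exact hm.2
          exact (g_strictMono hk).le_iff_le.1 h5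
      · intro z hz
        rw [psi_psi hk hz, psi_apply hz, g_am hk]
        have : g k (z.arg/2) + (s + m * (2*KK k)) = (g k (z.arg/2) + g k α + g k β) + m * (2*KK k) := by
          rw [hs]; ring
        rw [this, am_add_int hk]
        exact (exp_pi_periodic _ m).symm
    rcases le_or_gt s (KK k) with h1 | h1
    · rcases lt_or_ge (-(KK k)) s with h2 | h2
      · exact key 0 ⟨by push_cast; linarith, by push_cast; linarith⟩
      · -- s ≤ -K, so s + 2K ∈ (0, K] ⊂ (-K, K]
        apply key 1
        constructor
        · push_cast; nlinarith
        · push_cast; nlinarith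
    · -- s > K, so s - 2K ∈ (-K, 0] ⊂ (-K, K]
      apply key (-1)
      constructor
      · push_cast; nlinarith
      · push_cast; nlinarith
  · -- commutativity
    intro α β z hz
    rw [psi_psi hk hz, psi_psi hk hz, add_right_comm]
  · -- identity
    intro z hz
    rw [psi_apply hz, g_zero hk, add_zero, am_g hk]
    exact hid z hz
  · -- inverse
    intro α z hz
    constructor
    · rw [psi_psi hk hz, g_neg hk]
      rw [show g k (z.arg/2) + g k α + -g k α = g k (z.arg/2) by ring, am_g hk]
      exact hid z hz
    · rw [psi_psi hk hz, g_neg hk]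
      rw [show g k (z.arg/2) + -g k α + g k α = g k (z.arg/2) by ring, am_g hk]
      exact hid z hz
  · -- involution
    intro z hz
    rw [psi_psi hk hz]
    have : g k (z.arg/2) + g k (Real.pi/2) + g k (Real.pi/2) = g k (z.arg/2) + (1:ℤ) * (2 * KK k) := by
      rw [← KK]; push_cast; ring
    rw [this, am_add_int hk]
    rw [exp_pi_periodic (am k (g k (z.arg/2))) 1, am_g hk]
    exact hid z hz
  · -- uniqueness
    intro α hα h
    obtain ⟨ha1, ha2⟩ := hgIoc α hα
    have h1 : psi k α (psi k α 1) = 1 := h 1 (by norm_num)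
    rw [psi_psi hk (by norm_num : ‖(1:ℂ)‖ = 1)] at h1
    rw [Complex.arg_one] at h1
    norm_num [g_zero hk] at h1
    -- h1 : exp(2I * am(gα + gα)) = 1
    have h2 := Complex.exp_eq_one_iff.1 h1
    obtain ⟨n, hn⟩ := h2
    have h3 : (2 : ℂ) * Complex.I * ((am k (g k α + g k α) : ℝ) : ℂ) = ((2 * (n * Real.pi) : ℝ) : ℂ) * Complex.I := by
      rw [hn]; push_cast; ring
    have h4 : (am k (g k α + g k α)) = n * Real.pi := by
      have h5 : ((2 * am k (g k α + g k α) : ℝ) : ℂ) * Complex.I = ((2 * (n * Real.pi) : ℝ) : ℂ) * Complex.I := by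
        rw [← h3]; push_cast; ring
      have h6 := mul_right_cancel₀ Complex.I_ne_zero h5
      have h7 : (2 * am k (g k α + g k α) : ℝ) = 2 * (n * Real.pi) := by exact_mod_cast h6
      linarith
    -- so g α + g α = g(nπ) = n * 2K
    have h8 : g k α + g k α = n * (2 * KK k) := by
      have := congrArg (g k) h4
      rw [g_am hk] at this
      rw [this]
      simpa [g_zero hk] using g_add_int hk 0 n
    -- g α = n K, with g α ∈ (-K, K]
    have h9 : g k α = n * KK k := by linarith
    have hn01 : n = 0 ∨ n = 1 := by
      rw [h9] at ha1 ha2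
      have hn1 : (n:ℝ) ≤ 1 := by
        by_contra hc
        push_neg at hc
        nlinarith
      have hn0 : (-1:ℝ) < n := by
        by_contra hc
        push_neg at hc
        nlinarith
      have e1 : (-1:ℤ) < n := by exact_mod_cast hn0
      have e2 : n ≤ 1 := by exact_mod_cast hn1
      omega
    rcases hn01 with rfl | rfl
    · left
      apply hginj
      rw [g_zero hk, h9]; norm_num
    · right
      apply hginj
      rw [h9, ← KK]; norm_num
end

section
/- If z₁ and z₂ are distinct points on the unit circle and z₃ lies on the real axis, then the distance from z₃ to the line through z₁ and z₂ equals (1/2)|z₃(1 + z₁z₂) − (z₁ + z₂)|. -/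
open Complex

theorem stmt_10 (z₁ z₂ : ℂ) (h₁ : ‖z₁‖ = 1) (h₂ : ‖z₂‖ = 1) (hne : z₁ ≠ z₂) (x : ℝ) :
    Metric.infDist (x : ℂ) (affineSpan ℝ {z₁, z₂} : Set ℂ) =
      (1 / 2) * ‖(x : ℂ) * (1 + z₁ * z₂) - (z₁ + z₂)‖ := by
  have hz₁ : z₁ ≠ 0 := by intro h; rw [h] at h₁; simp at h₁
  have hz₂ : z₂ ≠ 0 := by intro h; rw [h] at h₂; simp at h₂
  set d : ℂ := z₂ - z₁ with hd_def
  have hd : d ≠ 0 := sub_ne_zero.mpr (Ne.symm hne)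
  have hdnorm : ‖d‖ ≠ 0 := norm_ne_zero_iff.mpr hd
  set u : ℂ := (starRingEnd ℂ) d * ((x : ℂ) - z₁) with hu_def
  set c : ℝ := |u.im| / ‖d‖ with hc_def
  have hdd : d * (starRingEnd ℂ) d = ((‖d‖ : ℂ)) ^ 2 := by
    rw [Complex.mul_conj]
    norm_cast
    simp [Complex.normSq_eq_norm_sq]
  -- key: for y on the line, conj d * (x - y) = u - t‖d‖²
  have hmul : ∀ t : ℝ, (starRingEnd ℂ) d * ((x : ℂ) - (t • d + z₁)) = u - ((t * ‖d‖ ^ 2 : ℝ) : ℂ) := by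
    intro t
    rw [hu_def, Complex.real_smul]
    push_cast
    linear_combination (-(t : ℂ)) * hdd
  have hdist : ∀ t : ℝ, dist (x : ℂ) (t • d + z₁) = ‖u - ((t * ‖d‖ ^ 2 : ℝ) : ℂ)‖ / ‖d‖ := by
    intro t
    rw [eq_div_iff hdnorm, ← hmul t, norm_mul, RCLike.norm_conj, Complex.dist_eq]
    ring
  -- lower bound
  have hlb : ∀ y ∈ (affineSpan ℝ {z₁, z₂} : Set ℂ), c ≤ dist (x : ℂ) y := by
    intro y hy
    obtain ⟨t, ht⟩ := (vadd_left_mem_affineSpan_pair (k := ℝ) (p₁ := z₁) (p₂ := z₂)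
      (v := y - z₁)).mp (by simpa using hy)
    have hy' : y = t • d + z₁ := by
      have h : t • d = y - z₁ := by simpa [hd_def] using ht
      rw [h]; ring
    rw [hy', hdist t, hc_def]
    gcongr
    calc |u.im| = |(u - ((t * ‖d‖ ^ 2 : ℝ) : ℂ)).im| := by rw [Complex.sub_im, Complex.ofReal_im, sub_zero]
      _ ≤ ‖u - ((t * ‖d‖ ^ 2 : ℝ) : ℂ)‖ := Complex.abs_im_le_norm _
      _ = ‖u - ((t * ‖d‖ ^ 2 : ℝ) : ℂ)‖ := rfl
  -- the foot of the perpendicular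
  set t₀ : ℝ := u.re / ‖d‖ ^ 2 with ht₀
  have hfoot : dist (x : ℂ) (t₀ • d + z₁) = c := by
    rw [hdist t₀, hc_def]
    congr 1
    have h1 : (t₀ * ‖d‖ ^ 2 : ℝ) = u.re :=
      div_mul_cancel₀ u.re (pow_ne_zero 2 hdnorm)
    rw [h1]
    have h2 : u - (u.re : ℂ) = (u.im : ℝ) * Complex.I := by
      rw [Complex.ext_iff]; simp
    rw [h2]
    simp
  have hmem : (t₀ • d + z₁) ∈ (affineSpan ℝ {z₁, z₂} : Set ℂ) := by
    have := smul_vsub_vadd_mem_affineSpan_pair (k := ℝ) t₀ z₁ z₂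
    simpa [hd_def] using this
  have hinf : Metric.infDist (x : ℂ) (affineSpan ℝ {z₁, z₂} : Set ℂ) = c := by
    refine le_antisymm ?_ ?_
    · calc Metric.infDist (x : ℂ) (affineSpan ℝ {z₁, z₂} : Set ℂ)
          ≤ dist (x : ℂ) (t₀ • d + z₁) := Metric.infDist_le_dist_of_mem hmem
        _ = c := hfoot
    · rw [Metric.infDist_eq_iInf]
      have : Nonempty (affineSpan ℝ {z₁, z₂} : Set ℂ) := ⟨⟨_, hmem⟩⟩
      exact le_ciInf fun y => hlb y y.2
  rw [hinf]
  -- now the algebraic identity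
  have h1' : z₁ * (starRingEnd ℂ) z₁ = 1 := by
    rw [Complex.mul_conj]
    norm_cast
    simp [Complex.normSq_eq_norm_sq, h₁]
  have h2' : z₂ * (starRingEnd ℂ) z₂ = 1 := by
    rw [Complex.mul_conj]
    norm_cast
    simp [Complex.normSq_eq_norm_sq, h₂]
  set w : ℂ := (x : ℂ) * (1 + z₁ * z₂) - (z₁ + z₂) with hw
  have key : z₁ * z₂ * (u - (starRingEnd ℂ) u) = (z₁ - z₂) * w := by
    rw [hu_def, hw]
    simp only [map_mul, map_sub, Complex.conj_conj, Complex.conj_ofReal, hd_def]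
    linear_combination ((x : ℂ) * z₁ - z₁ ^ 2) * h2' + (z₂ ^ 2 - (x : ℂ) * z₂) * h1'
  have hsub : u - (starRingEnd ℂ) u = ((2 * u.im : ℝ) : ℂ) * Complex.I := Complex.sub_conj u
  have hnorms : ‖z₁ - z₂‖ * ‖w‖ = 2 * |u.im| := by
    have h3 : ‖z₁ * z₂ * (u - (starRingEnd ℂ) u)‖ = ‖(z₁ - z₂) * w‖ := by rw [key]
    simp only [norm_mul, h₁, h₂, one_mul, hsub, Complex.norm_real, Complex.norm_I, mul_one] at h3
    rw [← h3]
    norm_num [Real.norm_eq_abs]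
  have hdz : ‖d‖ = ‖z₁ - z₂‖ := by rw [hd_def, ← norm_neg]; congr 1; ring
  have hz12 : ‖z₁ - z₂‖ ≠ 0 := by rwa [← hdz]
  rw [hc_def, hdz, div_eq_iff hz12]
  linarith [hnorms]
end
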